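/- arXiv:1410.4902 — 2 statements merged into one kernel-verified Lean document; each statement's English description precedes it below -/
import Mathlib

section
/- Every finite graph G that is (2k−1)-edge-connected contains a spanning bipartite subgraph H that is k-edge-connected. -/
/-- A graph is bipartite if its vertex set can be partitioned into two parts
(a set `A` and its complement) so that every edge has one endpoint in each part. -/
def IsBipartite {V : Type*} (G : SimpleGraph V) : Prop :=
  ∃ A : Set V, ∀ ⦃u v : V⦄, G.Adj u v → (u ∈ A ↔ v ∉ A)

/-- The set of edges of `G` with one endpoint in `X` and the other endpoint
outside `X` (i.e. in `V(G) \ X`). -/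
def crossEdges {V : Type*} (G : SimpleGraph V) (X : Set V) : Set (Sym2 V) :=
  {e | e ∈ G.edgeSet ∧ ∃ u v : V, u ∈ X ∧ v ∉ X ∧ e = s(u, v)}

/-- A graph is `ℓ`-edge-connected if it has at least two vertices and, for every nonempty
proper subset `X` of the vertex set, at least `ℓ` edges have one endpoint in `X` and the
other outside `X`. -/
def IsEdgeConnected {V : Type*} (ℓ : ℕ) (G : SimpleGraph V) : Prop :=
  2 ≤ Nat.card V ∧ ∀ X : Set V, X.Nonempty → X ≠ Set.univ → ℓ ≤ (crossEdges G X).ncard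

/-!
Take a maximum cut `A` of `G` and let `H` consist of the edges of `G` crossing it. For any
cut `X`, the edges of `G` crossing `A ∆ X` are exactly those crossing one of `A`, `X` but not
both, so maximality of `A` gives `|δ_G(X) \ δ_G(A)| ≤ |δ_G(X) ∩ δ_G(A)| = |δ_H(X)|`. Hence
`2k - 1 ≤ |δ_G(X)| ≤ 2 |δ_H(X)|`, i.e. `k ≤ |δ_H(X)|`.
-/

theorem Set.ncard_le_two_mul_ncard_inter_of_ncard_symmDiff_le {α : Type*} {s t : Set α}
    (hs : s.Finite) (ht : t.Finite) (h : (symmDiff s t).ncard ≤ s.ncard) :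
    t.ncard ≤ 2 * (s ∩ t).ncard := by
  have hsymm : (symmDiff s t).ncard = (s \ t).ncard + (t \ s).ncard :=
    Set.ncard_union_eq disjoint_sdiff_sdiff hs.sdiff ht.sdiff
  have hs' := Set.ncard_inter_add_ncard_sdiff_eq_ncard s t hs
  have ht' := Set.ncard_inter_add_ncard_sdiff_eq_ncard t s ht
  rw [Set.inter_comm t s] at ht'
  omega

section crossEdges

variable {V : Type*} (G : SimpleGraph V)

theorem mk_mem_crossEdges_iff (X : Set V) (a b : V) :
    s(a, b) ∈ crossEdges G X ↔ G.Adj a b ∧ (a ∈ X ↔ b ∉ X) := by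
  constructor
  · rintro ⟨he, u, v, hu, hv, hs⟩
    rcases Sym2.eq_iff.mp hs with ⟨rfl, rfl⟩ | ⟨rfl, rfl⟩ <;> exact ⟨he, by tauto⟩
  · rintro ⟨he, hX⟩
    refine ⟨he, ?_⟩
    by_cases ha : a ∈ X
    · exact ⟨a, b, ha, hX.mp ha, rfl⟩
    · exact ⟨b, a, by tauto, ha, Sym2.eq_swap⟩

theorem crossEdges_symmDiff (A X : Set V) :
    crossEdges G (symmDiff A X) = symmDiff (crossEdges G A) (crossEdges G X) := by
  ext e
  induction e using Sym2.ind with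
  | _ a b =>
    simp only [Set.mem_symmDiff, mk_mem_crossEdges_iff]
    tauto

def cutSubgraph (A : Set V) : SimpleGraph V where
  Adj u v := G.Adj u v ∧ (u ∈ A ↔ v ∉ A)
  symm := ⟨fun _ _ h => ⟨h.1.symm, by tauto⟩⟩
  loopless := ⟨fun _ h => G.irrefl h.1⟩

theorem cutSubgraph_le (A : Set V) : cutSubgraph G A ≤ G := fun _ _ h => h.1

theorem isBipartite_cutSubgraph (A : Set V) : IsBipartite (cutSubgraph G A) :=
  ⟨A, fun _ _ h => h.2⟩

theorem crossEdges_cutSubgraph (A X : Set V) :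
    crossEdges (cutSubgraph G A) X = crossEdges G A ∩ crossEdges G X := by
  ext e
  induction e using Sym2.ind with
  | _ a b =>
    simp only [Set.mem_inter_iff, mk_mem_crossEdges_iff]
    exact ⟨fun ⟨⟨hG, hA⟩, hX⟩ => ⟨⟨hG, hA⟩, hG, hX⟩, fun ⟨⟨hG, hA⟩, _, hX⟩ => ⟨⟨hG, hA⟩, hX⟩⟩

theorem ncard_crossEdges_le_two_mul_ncard_crossEdges_cutSubgraph [Finite V] {A : Set V}
    (hA : ∀ B : Set V, (crossEdges G B).ncard ≤ (crossEdges G A).ncard) (X : Set V) :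
    (crossEdges G X).ncard ≤ 2 * (crossEdges (cutSubgraph G A) X).ncard := by
  rw [crossEdges_cutSubgraph]
  refine Set.ncard_le_two_mul_ncard_inter_of_ncard_symmDiff_le (Set.toFinite _)
    (Set.toFinite _) ?_
  rw [← crossEdges_symmDiff]
  exact hA _

end crossEdges

/-- Every finite graph `G` that is `(2k − 1)`-edge-connected contains a spanning
bipartite subgraph `H` that is `k`-edge-connected. -/
theorem spanning_bipartite_edge_connected {V : Type*} [Fintype V] (k : ℕ) (G : SimpleGraph V)
    (h : IsEdgeConnected (2 * k - 1) G) :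
    ∃ H : SimpleGraph V, H ≤ G ∧ IsBipartite H ∧ IsEdgeConnected k H := by
  obtain ⟨A, hA⟩ := Finite.exists_max (fun A : Set V => (crossEdges G A).ncard)
  refine ⟨cutSubgraph G A, cutSubgraph_le G A, isBipartite_cutSubgraph G A, h.1,
    fun X hX hXV => ?_⟩
  have hG := h.2 X hX hXV
  have hH := ncard_crossEdges_le_two_mul_ncard_crossEdges_cutSubgraph G hA X
  omega
end

section
/- Every finite graph G with average degree at least 8ℓ contains a (not necessarily spanning) bipartite subgraph H that is ℓ-connected. -/
/-- A graph is `k`-(vertex-)connected if it has more than `k` vertices and remains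
connected after the deletion of any set of fewer than `k` vertices. -/
def IsKConnected {V : Type*} (k : ℕ) (G : SimpleGraph V) : Prop :=
  k < Nat.card V ∧ ∀ S : Set V, S.ncard < k → (G.induce Sᶜ).Connected

/-!
Greedily placing each vertex opposite the majority of its already placed neighbours gives a cut
`G.between A Aᶜ` keeping at least half of the edges, so this bipartite subgraph has average degree
at least `4ℓ`. Mader's argument then finds an `ℓ`-connected induced subgraph in it: take a minimal
vertex set `U` with `|U| ≥ 2ℓ - 1` and more than `(2ℓ - 3)(|U| - ℓ + 1)` edges. Deleting a vertex of
degree at most `2ℓ - 3` would keep this density, so the minimum degree is at least `2ℓ - 2`; hence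
both sides of a separation of `U` by fewer than `ℓ` vertices have at least `2ℓ - 1` vertices, and
counting edges shows that one side is again dense, contradicting minimality.
-/

open Finset

theorem isKConnected_zero {V : Type*} [Finite V] [Nonempty V] (G : SimpleGraph V) :
    IsKConnected 0 G :=
  ⟨Nat.card_pos, fun _ hS => absurd hS (Nat.not_lt_zero _)⟩

theorem IsBipartite.induce {V : Type*} {G : SimpleGraph V} (h : IsBipartite G) (s : Set V) :
    IsBipartite (G.induce s) :=
  let ⟨A, hA⟩ := h
  ⟨Subtype.val ⁻¹' A, fun _ _ huv => hA huv⟩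

namespace SimpleGraph

variable {V : Type*} (G : SimpleGraph V)

theorem coe_induce_toSubgraph {H : SimpleGraph V} (h : H ≤ G) (s : Set V) :
    ((G.toSubgraph H h).induce s).coe = H.induce s := by
  ext ⟨a, ha⟩ ⟨b, hb⟩
  exact ⟨fun h => h.2.2, fun h => ⟨ha, hb, h⟩⟩

noncomputable def induceInduceIso (s : Set V) (t : Set s) :
    (G.induce s).induce t ≃g G.induce (Subtype.val '' t) where
  toEquiv := Equiv.Set.image Subtype.val t Subtype.val_injective
  map_rel_iff' := Iff.rfl

section Interedges

variable [DecidableRel G.Adj]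

theorem card_interedges_univ [Fintype V] :
    #(G.interedges univ univ) = 2 * G.edgeSet.ncard := by
  rw [Set.ncard_eq_toFinset_card', ← edgeFinset, two_mul_card_edgeFinset]
  rfl

theorem card_interedges_self_add_card_le (s : Finset V) :
    #(G.interedges s s) + #s ≤ #s * #s := by
  classical
  have hsub : G.interedges s s ⊆ s.offDiag := fun p hp => by
    rw [mem_interedges_iff] at hp
    exact mem_offDiag.2 ⟨hp.1, hp.2.1, hp.2.2.ne⟩
  have := card_le_card hsub
  have := s.offDiag_card
  have : #s ≤ #s * #s := Nat.le_mul_self _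
  omega

theorem card_interedges_comm (s t : Finset V) :
    #(G.interedges s t) = #(G.interedges t s) :=
  have : Std.Symm G.Adj := ⟨fun _ _ h => h.symm⟩
  Rel.card_interedges_comm s t

variable [DecidableEq V]

theorem card_interedges_union_left {s s' : Finset V} (h : Disjoint s s') (t : Finset V) :
    #(G.interedges (s ∪ s') t) = #(G.interedges s t) + #(G.interedges s' t) := by
  rw [← card_union_of_disjoint (G.interedges_disjoint_left h t)]
  congr 1
  ext
  simp only [mem_interedges_iff, mem_union]
  tauto

theorem card_interedges_union_right (s : Finset V) {t t' : Finset V} (h : Disjoint t t') :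
    #(G.interedges s (t ∪ t')) = #(G.interedges s t) + #(G.interedges s t') := by
  simp only [G.card_interedges_comm s, G.card_interedges_union_left h]

theorem card_interedges_singleton_left (v : V) (t : Finset V) :
    #(G.interedges {v} t) = #{w ∈ t | G.Adj v w} := by
  rw [interedges, Rel.interedges_eq_biUnion, singleton_biUnion, card_map]

theorem card_interedges_insert {s : Finset V} {v : V} (hv : v ∉ s) :
    #(G.interedges (insert v s) (insert v s)) =
      #(G.interedges s s) + 2 * #{w ∈ s | G.Adj v w} := by
  have hd : Disjoint {v} s := disjoint_singleton_left.2 hv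
  rw [insert_eq, G.card_interedges_union_left hd, G.card_interedges_union_right _ hd,
    G.card_interedges_union_right _ hd, G.card_interedges_comm s {v},
    G.card_interedges_singleton_left, G.card_interedges_singleton_left]
  simp only [filter_singleton, G.irrefl, if_false, card_empty]
  ring

end Interedges

section Cut

variable [DecidableEq V]

theorem between_compl_adj {A : Finset V} {a b : V} :
    (G.between ↑A (↑A)ᶜ).Adj a b ↔ G.Adj a b ∧ (a ∈ A ↔ b ∉ A) := by
  simp only [between_adj, Set.mem_compl_iff, mem_coe]
  tauto

theorem isBipartite_between (A : Finset V) : _root_.IsBipartite (G.between ↑A (↑A)ᶜ) :=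
  ⟨A, fun _ _ h => by
    rw [between_compl_adj] at h
    exact h.2⟩

variable [DecidableRel G.Adj]

theorem interedges_between_congr {s A B : Finset V} (h : ∀ a ∈ s, a ∈ A ↔ a ∈ B) :
    (G.between ↑A (↑A)ᶜ).interedges s s = (G.between ↑B (↑B)ᶜ).interedges s s := by
  ext ⟨a, b⟩
  simp only [mem_interedges_iff, between_compl_adj]
  constructor <;> rintro ⟨ha, hb, hab, hiff⟩ <;> refine ⟨ha, hb, hab, ?_⟩
  · rwa [← h a ha, ← h b hb]
  · rwa [h a ha, h b hb]

theorem card_filter_between_add_card_filter_between_insert {A : Finset V} {v : V} (hv : v ∉ A)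
    (s : Finset V) :
    #{w ∈ s | (G.between ↑A (↑A)ᶜ).Adj v w} +
      #{w ∈ s | (G.between ↑(insert v A) (↑(insert v A))ᶜ).Adj v w} =
      #{w ∈ s | G.Adj v w} := by
  have hA : {w ∈ s | (G.between ↑A (↑A)ᶜ).Adj v w} = {w ∈ s | G.Adj v w ∧ w ∈ A} :=
    filter_congr fun w _ => by simp [between_compl_adj, hv]
  have hA' : {w ∈ s | (G.between ↑(insert v A) (↑(insert v A))ᶜ).Adj v w} =
      {w ∈ s | G.Adj v w ∧ w ∉ A} :=
    filter_congr fun w _ => by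
      simp only [between_compl_adj, mem_insert, true_or, true_iff, not_or, and_congr_right_iff]
      exact fun hvw => and_iff_right (G.ne_of_adj hvw).symm
  rw [hA, hA', ← filter_filter, ← filter_filter, card_filter_add_card_filter_not]

theorem exists_card_interedges_le_two_mul_between (s : Finset V) :
    ∃ A ⊆ s, #(G.interedges s s) ≤ 2 * #((G.between ↑A (↑A)ᶜ).interedges s s) := by
  induction s using Finset.induction_on with
  | empty => exact ⟨∅, subset_refl _, by simp⟩
  | insert v s hv ih =>
    obtain ⟨A, hAs, hA⟩ := ih
    have hsplit := G.card_filter_between_add_card_filter_between_insert (fun h => hv (hAs h)) s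
    obtain ⟨B, hBs, hBA, hvB⟩ : ∃ B ⊆ insert v s, (∀ a ∈ s, a ∈ B ↔ a ∈ A) ∧
        #{w ∈ s | G.Adj v w} ≤ 2 * #{w ∈ s | (G.between ↑B (↑B)ᶜ).Adj v w} := by
      by_cases hle : #{w ∈ s | G.Adj v w} ≤ 2 * #{w ∈ s | (G.between ↑A (↑A)ᶜ).Adj v w}
      · exact ⟨A, hAs.trans (subset_insert v s), fun _ _ => Iff.rfl, hle⟩
      · refine ⟨insert v A, insert_subset_insert v hAs, fun a ha => ?_, by omega⟩
        rw [mem_insert, or_iff_right (ne_of_mem_of_not_mem ha hv)]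
    refine ⟨B, hBs, ?_⟩
    rw [G.card_interedges_insert hv, card_interedges_insert _ hv, G.interedges_between_congr hBA]
    omega

end Cut


section Separation

variable [DecidableEq V]

structure IsSeparation (U₁ U₂ : Finset V) : Prop where
  left_nonempty : (U₁ \ U₂).Nonempty
  right_nonempty : (U₂ \ U₁).Nonempty
  not_adj : ∀ a ∈ U₁ \ U₂, ∀ b ∈ U₂ \ U₁, ¬G.Adj a b

variable {G}

theorem IsSeparation.symm {U₁ U₂ : Finset V} (h : G.IsSeparation U₁ U₂) :
    G.IsSeparation U₂ U₁ :=
  ⟨h.right_nonempty, h.left_nonempty, fun a ha b hb hab => h.not_adj b hb a ha hab.symm⟩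

theorem exists_isSeparation_of_not_connected_induce {U T : Finset V} (hT : T ⊆ U)
    (hne : (U \ T).Nonempty) (h : ¬(G.induce ((U \ T : Finset V) : Set V)).Connected) :
    ∃ U₁ U₂, U₁ ∪ U₂ = U ∧ U₁ ∩ U₂ ⊆ T ∧ G.IsSeparation U₁ U₂ := by
  classical
  set H := G.induce ((U \ T : Finset V) : Set V)
  have : Nonempty ((U \ T : Finset V) : Set V) := hne.coe_sort
  obtain ⟨x, y, hxy⟩ : ∃ x y, ¬H.Reachable x y := by
    by_contra! hr
    exact h ⟨hr⟩
  set X : Finset V := {a ∈ U \ T | ∃ ha : a ∈ ((U \ T : Finset V) : Set V), H.Reachable x ⟨a, ha⟩}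
  have hX : ∀ a, a ∈ X ↔ ∃ ha : a ∈ ((U \ T : Finset V) : Set V), H.Reachable x ⟨a, ha⟩ := by
    intro a
    simp only [X, mem_filter, and_iff_right_iff_imp]
    exact fun ⟨ha, _⟩ => ha
  have hXU : X ⊆ U := fun a ha => (mem_sdiff.1 (mem_filter.1 ha).1).1
  have hxX : x.1 ∈ X := (hX _).2 ⟨x.2, .rfl⟩
  have hyX : y.1 ∉ X := fun hy => by
    obtain ⟨_, hr⟩ := (hX _).1 hy
    exact hxy hr
  have hyUT := mem_sdiff.1 (mem_coe.1 y.2)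
  refine ⟨X ∪ T, U \ X, ?_, ?_, ⟨⟨x, ?_⟩, ⟨y, ?_⟩, ?_⟩⟩
  · ext a
    simp only [mem_union, mem_sdiff]
    constructor
    · rintro ((ha | ha) | ⟨ha, -⟩)
      exacts [hXU ha, hT ha, ha]
    · intro ha
      tauto
  · intro a ha
    simp only [mem_inter, mem_union, mem_sdiff] at ha
    tauto
  · simp [hxX]
  · simp [hyX, hyUT]
  · intro a ha b hb hab
    simp only [mem_sdiff, mem_union, not_and, not_not, not_or] at ha hb
    have haX : a ∈ X := ha.1.elim id fun haT => ha.2 (hT haT)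
    obtain ⟨⟨hbU, hbX⟩, -, hbT⟩ := hb
    obtain ⟨_, hxa⟩ := (hX a).1 haX
    have hbUT : b ∈ ((U \ T : Finset V) : Set V) := mem_coe.2 (mem_sdiff.2 ⟨hbU, hbT⟩)
    exact hbX ((hX b).2 ⟨hbUT, hxa.trans (Adj.reachable (G := H) hab)⟩)

theorem exists_isSeparation_of_not_isKConnected {k : ℕ} {U : Finset V} (hk : k < #U)
    (h : ¬IsKConnected k (G.induce (U : Set V))) :
    ∃ U₁ U₂, U₁ ∪ U₂ = U ∧ #(U₁ ∩ U₂) < k ∧ G.IsSeparation U₁ U₂ := by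
  have hcard : Nat.card (U : Set V) = #U := by simp
  obtain ⟨S, hSk, hS⟩ : ∃ S : Set (U : Set V), S.ncard < k ∧ ¬((G.induce U).induce Sᶜ).Connected := by
    simpa [IsKConnected, hcard, hk] using h
  set T : Finset V := (S.toFinite.image Subtype.val).toFinset
  have hTcoe : (T : Set V) = Subtype.val '' S := Set.Finite.coe_toFinset _
  have hTk : #T < k := by
    rwa [← Set.ncard_coe_finset, hTcoe, Set.ncard_image_of_injective _ Subtype.val_injective]
  have hTU : T ⊆ U := by
    intro a ha
    rw [← mem_coe, hTcoe] at ha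
    obtain ⟨b, -, rfl⟩ := ha
    exact b.2
  have hsdiff : Subtype.val '' Sᶜ = ((U \ T : Finset V) : Set V) := by
    rw [coe_sdiff, hTcoe, Set.image_val_compl]
  have hUT : ¬(G.induce ↑(U \ T)).Connected := by
    rwa [← hsdiff, ← (G.induceInduceIso U Sᶜ).connected_iff]
  have hne : (U \ T).Nonempty := sdiff_nonempty.2 fun hUsub => by
    have := card_le_card hUsub
    omega
  obtain ⟨U₁, U₂, hU, hT, hsep⟩ := exists_isSeparation_of_not_connected_induce hTU hne hUT
  exact ⟨U₁, U₂, hU, (card_le_card hT).trans_lt hTk, hsep⟩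

variable [DecidableRel G.Adj]

theorem IsSeparation.card_filter_adj_lt {U₁ U₂ : Finset V} (h : G.IsSeparation U₁ U₂) {v : V}
    (hv : v ∈ U₁ \ U₂) : #{w ∈ U₁ ∪ U₂ | G.Adj v w} < #U₁ := by
  have hsub : {w ∈ U₁ ∪ U₂ | G.Adj v w} ⊆ U₁.erase v := fun w hw => by
    rw [mem_filter, mem_union] at hw
    refine mem_erase.2 ⟨(G.ne_of_adj hw.2).symm, hw.1.elim id fun hw₂ => ?_⟩
    by_contra hw₁
    exact h.not_adj v hv w (mem_sdiff.2 ⟨hw₂, hw₁⟩) hw.2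
  exact (card_le_card hsub).trans_lt (card_erase_lt_of_mem (mem_sdiff.1 hv).1)

theorem IsSeparation.card_interedges_union_le {U₁ U₂ : Finset V} (h : G.IsSeparation U₁ U₂) :
    #(G.interedges (U₁ ∪ U₂) (U₁ ∪ U₂)) ≤ #(G.interedges U₁ U₁) + #(G.interedges U₂ U₂) := by
  refine (card_le_card fun p hp => ?_).trans (card_union_le _ _)
  rw [mem_interedges_iff, mem_union, mem_union] at hp
  rw [mem_union, mem_interedges_iff, mem_interedges_iff]
  obtain ⟨ha, hb, hab⟩ := hp
  have h₁ := fun ha hb => h.not_adj p.1 ha p.2 hb hab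
  have h₂ := fun hb ha => h.not_adj p.2 hb p.1 ha hab.symm
  simp only [mem_sdiff] at h₁ h₂
  tauto

end Separation

section Mader

variable [DecidableRel G.Adj]

/-- `#(G.interedges U U)` counts every edge of `G[U]` twice, so for `c = 2k - 3` this is Mader's
condition `|U| ≥ 2k - 1` and `‖G[U]‖ > c (|U| - k + 1)`. -/
def IsMaderDense (k c : ℕ) (U : Finset V) : Prop :=
  2 * k ≤ #U + 1 ∧ 2 * c * (#U + 1) < #(G.interedges U U) + 2 * c * k

variable {G} {k c : ℕ}

theorem IsMaderDense.lt_card {U : Finset V} (h : G.IsMaderDense k c U) (hk : 1 ≤ k) : k < #U := by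
  obtain ⟨hU, hE⟩ := h
  have hsq := G.card_interedges_self_add_card_le U
  by_contra!
  nlinarith

theorem isMaderDense_of_four_mul_le (hk : 1 ≤ k) {U : Finset V} (hU : U.Nonempty)
    (h : 4 * k * #U ≤ #(G.interedges U U)) : G.IsMaderDense k (2 * k - 3) U := by
  have hsq := G.card_interedges_self_add_card_le U
  have hn := hU.card_pos
  have hc : 2 * k - 3 + 1 ≤ 2 * k := by omega
  generalize 2 * k - 3 = c at *
  have h4k : 4 * k + 1 ≤ #U := by nlinarith
  exact ⟨by omega, by nlinarith⟩

variable [DecidableEq V]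

theorem IsMaderDense.erase {U : Finset V} (h : G.IsMaderDense k c U) (hc : 2 * k ≤ c + 3) {v : V}
    (hv : v ∈ U) (hdeg : #{w ∈ U | G.Adj v w} + 3 ≤ 2 * k) : G.IsMaderDense k c (U.erase v) := by
  obtain ⟨hU, hE⟩ := h
  have hEv := G.card_interedges_insert (notMem_erase v U)
  rw [insert_erase hv] at hEv
  have hd : #{w ∈ U.erase v | G.Adj v w} ≤ #{w ∈ U | G.Adj v w} :=
    card_le_card (filter_subset_filter _ (erase_subset v U))
  have hsq := G.card_interedges_self_add_card_le (U.erase v)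
  rw [← card_erase_add_one hv] at hU hE
  rw [hEv] at hE
  have hUv : 2 * k ≤ #(U.erase v) + 1 := by
    -- otherwise `|U| = 2k - 1` and `‖G[U]‖ ≤ (k - 1)(2k - 3) + (2k - 3) ≤ ck`: too few edges
    by_contra! hsmall
    have hn : #(U.erase v) + 2 = 2 * k := by omega
    nlinarith
  exact ⟨hUv, by nlinarith⟩

theorem IsMaderDense.of_isSeparation {U₁ U₂ : Finset V} (h : G.IsMaderDense k c (U₁ ∪ U₂))
    (hsep : G.IsSeparation U₁ U₂) (hint : #(U₁ ∩ U₂) < k) (hU₁ : 2 * k ≤ #U₁ + 1)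
    (hU₂ : 2 * k ≤ #U₂ + 1) : G.IsMaderDense k c U₁ ∨ G.IsMaderDense k c U₂ := by
  have hE := hsep.card_interedges_union_le
  have hcard := card_union_add_card_inter U₁ U₂
  by_contra! hsparse
  simp only [IsMaderDense, hU₁, hU₂, true_and, not_lt] at hsparse
  nlinarith [h.2]

theorem exists_isKConnected_induce (hk : 1 ≤ k) (hc : 2 * k ≤ c + 3) {U : Finset V}
    (hU : G.IsMaderDense k c U) : ∃ W ⊆ U, IsKConnected k (G.induce (W : Set V)) := by
  induction U using Finset.strongInduction with
  | H U ih =>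
  by_cases hlow : ∃ v ∈ U, #{w ∈ U | G.Adj v w} + 3 ≤ 2 * k
  · obtain ⟨v, hv, hdeg⟩ := hlow
    obtain ⟨W, hW, hconn⟩ := ih (U.erase v) (erase_ssubset hv) (hU.erase hc hv hdeg)
    exact ⟨W, hW.trans (erase_subset v U), hconn⟩
  by_cases hconn : IsKConnected k (G.induce (U : Set V))
  · exact ⟨U, subset_rfl, hconn⟩
  obtain ⟨U₁, U₂, rfl, hint, hsep⟩ := exists_isSeparation_of_not_isKConnected (hU.lt_card hk) hconn
  push Not at hlow
  have hside : ∀ {X Y : Finset V}, G.IsSeparation X Y → X ∪ Y = U₁ ∪ U₂ →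
      X ⊂ U₁ ∪ U₂ ∧ 2 * k ≤ #X + 1 := by
    intro X Y h hXY
    obtain ⟨x, hx⟩ := h.left_nonempty
    obtain ⟨y, hy⟩ := h.right_nonempty
    rw [← hXY] at hlow ⊢
    refine ⟨subset_union_left.ssubset_of_not_subset fun hYX => ?_, ?_⟩
    · exact (mem_sdiff.1 hy).2 (hYX (mem_union_right X (mem_sdiff.1 hy).1))
    · have := h.card_filter_adj_lt hx
      have := hlow x (mem_union_left Y (mem_sdiff.1 hx).1)
      omega
  obtain ⟨hsub₁, hU₁⟩ := hside hsep rfl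
  obtain ⟨hsub₂, hU₂⟩ := hside hsep.symm (union_comm _ _)
  rcases hU.of_isSeparation hsep hint hU₁ hU₂ with hdense | hdense
  · obtain ⟨W, hW, hconn⟩ := ih U₁ hsub₁ hdense
    exact ⟨W, hW.trans hsub₁.subset, hconn⟩
  · obtain ⟨W, hW, hconn⟩ := ih U₂ hsub₂ hdense
    exact ⟨W, hW.trans hsub₂.subset, hconn⟩

end Mader

end SimpleGraph

/-- Every finite graph `G` with average degree at least `8ℓ` (that is,
`2|E(G)| ≥ 8ℓ·|V(G)|` with `V(G)` nonempty) contains a (not necessarily spanning)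
bipartite subgraph `H` that is `ℓ`-connected. -/
theorem bipartite_mader {V : Type*} [Fintype V] [Nonempty V] (ℓ : ℕ) (G : SimpleGraph V)
    (havg : 8 * ℓ * Fintype.card V ≤ 2 * G.edgeSet.ncard) :
    ∃ H : G.Subgraph, IsBipartite H.coe ∧ IsKConnected ℓ H.coe := by
  classical
  obtain ⟨A, -, hA⟩ := G.exists_card_interedges_le_two_mul_between univ
  set K := G.between ↑A (↑A)ᶜ
  obtain ⟨W, hW⟩ : ∃ W : Finset V, IsKConnected ℓ (K.induce ↑W) := by
    rcases Nat.eq_zero_or_pos ℓ with rfl | hℓ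
    · obtain ⟨v⟩ := ‹Nonempty V›
      have : Nonempty (({v} : Finset V) : Set V) := ⟨⟨v, mem_singleton_self v⟩⟩
      exact ⟨{v}, isKConnected_zero _⟩
    have hdense : K.IsMaderDense ℓ (2 * ℓ - 3) univ := by
      refine SimpleGraph.isMaderDense_of_four_mul_le hℓ univ_nonempty ?_
      rw [G.card_interedges_univ] at hA
      rw [card_univ]
      linarith
    obtain ⟨W, -, hW⟩ := SimpleGraph.exists_isKConnected_induce hℓ (by omega) hdense
    exact ⟨W, hW⟩
  refine ⟨(G.toSubgraph K SimpleGraph.between_le).induce ↑W, ?_, ?_⟩ <;>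
    rw [SimpleGraph.coe_induce_toSubgraph]
  exacts [(G.isBipartite_between A).induce _, hW]
end
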